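/- arXiv:0802.2323 — 6 statements merged into one kernel-verified Lean document; each statement's English description precedes it below -/
import Mathlib

section
/- For every finite simple graph G, the independence number α(G) satisfies α(G) ≥ Σ_{v ∈ V(G)} 1/(1 + d(v)), where d(v) is the degree of v. -/
open Finset

/-- The independence number of a graph: the largest cardinality of a set of
pairwise nonadjacent vertices. -/
noncomputable def indepNum {V : Type*} [Fintype V] (G : SimpleGraph V) : ℕ :=
  sSup {n | ∃ s : Finset V, (∀ v ∈ s, ∀ w ∈ s, ¬ G.Adj v w) ∧ s.card = n}

/-!
Greedy argument. Give each vertex `v` of a vertex set `A` the weight `1 / (1 + d_A(v))`, where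
`d_A` is the degree in the subgraph induced on `A`. Pick `v ∈ A` of minimum degree `d_A(v)`: each
of the `1 + d_A(v)` vertices of its closed neighbourhood has weight at most `1 / (1 + d_A(v))`,
so together they weigh at most `1`. Deleting that neighbourhood can only increase the weights of
the remaining vertices, so by induction they carry an independent set at least as large as their
weight, to which `v` can be added.
-/

namespace SimpleGraph

variable {V : Type*} {G : SimpleGraph V}

lemma IsIndepSet.insert_of_forall_not_adj {s : Set V} {v : V} (hs : G.IsIndepSet s)
    (hv : ∀ w ∈ s, ¬G.Adj v w) : G.IsIndepSet (insert v s) :=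
  hs.insert fun w hw _ => ⟨hv w hw, fun h => hv w hw h.symm⟩

variable (G) [DecidableRel G.Adj]

noncomputable def caroWeiWeight (A : Finset V) (v : V) : ℝ := 1 / (1 + #{w ∈ A | G.Adj v w})

noncomputable def caroWeiSum (A : Finset V) : ℝ := ∑ v ∈ A, G.caroWeiWeight A v

variable {G}

lemma caroWeiWeight_anti {A B : Finset V} (hBA : B ⊆ A) (v : V) :
    G.caroWeiWeight A v ≤ G.caroWeiWeight B v := by
  unfold caroWeiWeight
  gcongr

lemma caroWeiWeight_le_of_card_le {A : Finset V} {u v : V}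
    (h : #{w ∈ A | G.Adj v w} ≤ #{w ∈ A | G.Adj u w}) :
    G.caroWeiWeight A u ≤ G.caroWeiWeight A v := by
  unfold caroWeiWeight
  gcongr

lemma caroWeiSum_univ [Fintype V] :
    G.caroWeiSum univ = ∑ v : V, (1 : ℝ) / (1 + G.degree v) := by
  simp only [caroWeiSum, caroWeiWeight, ← card_neighborFinset_eq_degree, neighborFinset_eq_filter]

variable [DecidableEq V]

lemma sum_caroWeiWeight_closedNbhd_le_one {A : Finset V} {v : V}
    (hmin : ∀ u ∈ A, #{w ∈ A | G.Adj v w} ≤ #{w ∈ A | G.Adj u w}) :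
    ∑ u ∈ insert v {w ∈ A | G.Adj v w}, G.caroWeiWeight A u ≤ 1 := by
  calc ∑ u ∈ insert v {w ∈ A | G.Adj v w}, G.caroWeiWeight A u
      ≤ ∑ _u ∈ insert v {w ∈ A | G.Adj v w}, G.caroWeiWeight A v := by
        refine sum_le_sum fun u hu => ?_
        obtain rfl | hu := mem_insert.mp hu
        · rfl
        · exact caroWeiWeight_le_of_card_le (hmin u (mem_filter.mp hu).1)
    _ = 1 := by
        rw [sum_const, card_insert_of_notMem (by simp), nsmul_eq_mul, caroWeiWeight]
        push_cast
        field_simp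
        ring

lemma caroWeiSum_le_one_add_caroWeiSum_sdiff {A : Finset V} {v : V} (hv : v ∈ A)
    (hmin : ∀ u ∈ A, #{w ∈ A | G.Adj v w} ≤ #{w ∈ A | G.Adj u w}) :
    G.caroWeiSum A ≤ 1 + G.caroWeiSum (A \ insert v {w ∈ A | G.Adj v w}) := by
  have hN : insert v {w ∈ A | G.Adj v w} ⊆ A := insert_subset hv (filter_subset _ _)
  rw [caroWeiSum, ← sum_sdiff hN, add_comm, caroWeiSum]
  gcongr with u
  · exact sum_caroWeiWeight_closedNbhd_le_one hmin
  · exact caroWeiWeight_anti sdiff_subset u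

theorem exists_isIndepSet_caroWeiSum_le (A : Finset V) :
    ∃ s ⊆ A, G.IsIndepSet (s : Set V) ∧ G.caroWeiSum A ≤ #s := by
  induction A using Finset.strongInduction with
  | H A ih =>
  obtain rfl | hA := A.eq_empty_or_nonempty
  · exact ⟨∅, subset_rfl, by simp, by simp [caroWeiSum]⟩
  obtain ⟨v, hv, hmin⟩ := A.exists_min_image (fun u => #{w ∈ A | G.Adj u w}) hA
  set N := insert v {w ∈ A | G.Adj v w}
  obtain ⟨s, hsA, hs, hsum⟩ :=
    ih (A \ N) (sdiff_ssubset (insert_subset hv (filter_subset _ _)) (insert_nonempty _ _))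
  have hv_not_adj : ∀ w ∈ (s : Set V), ¬G.Adj v w := fun w hw hvw =>
    (mem_sdiff.mp (hsA hw)).2 (mem_insert_of_mem (mem_filter.mpr ⟨(mem_sdiff.mp (hsA hw)).1, hvw⟩))
  have hvs : v ∉ s := fun h => (mem_sdiff.mp (hsA h)).2 (mem_insert_self _ _)
  refine ⟨insert v s, insert_subset hv (hsA.trans sdiff_subset), ?_, ?_⟩
  · rw [coe_insert]
    exact hs.insert_of_forall_not_adj hv_not_adj
  · rw [card_insert_of_notMem hvs, Nat.cast_succ, add_comm]
    exact (caroWeiSum_le_one_add_caroWeiSum_sdiff hv hmin).trans (by gcongr)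

end SimpleGraph

lemma card_le_indepNum {V : Type*} [Fintype V] {G : SimpleGraph V} {s : Finset V}
    (hs : G.IsIndepSet (s : Set V)) : #s ≤ indepNum G :=
  le_csSup ⟨Fintype.card V, by rintro _ ⟨t, -, rfl⟩; exact t.card_le_univ⟩
    ⟨s, fun _ hv _ hw hvw => hs hv hw hvw.ne hvw, rfl⟩

/-- Wei's inequality: α(G) ≥ ∑_v 1/(1 + d(v)). -/
theorem wei_indep {V : Type*} [Fintype V] (G : SimpleGraph V) [DecidableRel G.Adj] :
    (∑ v : V, (1 : ℝ) / (1 + G.degree v)) ≤ indepNum G := by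
  classical
  obtain ⟨s, -, hs, hsum⟩ := G.exists_isIndepSet_caroWeiSum_le univ
  rw [← G.caroWeiSum_univ]
  exact hsum.trans (by exact_mod_cast card_le_indepNum hs)
end

section
/- For every finite simple graph G on n vertices, the clique number ω(G) satisfies ω(G) ≥ Σ_{v ∈ V(G)} 1/(n - d(v)). -/
open Finset

private lemma wei_aux {V : Type*} [Fintype V] [DecidableEq V] (G : SimpleGraph V)
    [DecidableRel G.Adj] (s : Finset V) :
    ∃ t : Finset V, t ⊆ s ∧ G.IsClique t ∧
      (∑ u ∈ s, (1 : ℝ) / ((s.card : ℝ) - (s.filter (G.Adj u)).card)) ≤ t.card := by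
  induction s using Finset.strongInduction with
  | _ s ih =>
    rcases s.eq_empty_or_nonempty with rfl | hne
    · exact ⟨∅, by simp, by simp [SimpleGraph.IsClique], by simp⟩
    obtain ⟨v, hv, hmax⟩ := s.exists_max_image (fun u => (s.filter (G.Adj u)).card) hne
    set s' : Finset V := s.filter (G.Adj v) with hs'
    have hs's : s' ⊆ s := filter_subset _ _
    have hvs' : v ∉ s' := by simp [hs']
    have hssub : s' ⊂ s := ⟨hs's, fun h => hvs' (h hv)⟩
    obtain ⟨t, hts, htc, hsum⟩ := ih s' hssub
    refine ⟨insert v t, ?_, ?_, ?_⟩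
    · exact insert_subset hv (hts.trans hs's)
    · rw [coe_insert]
      refine htc.insert fun u hu _ => ?_
      exact (mem_filter.mp (hts hu)).2
    · have hvt : v ∉ t := fun h => hvs' (hts h)
      rw [card_insert_of_notMem hvt]
      push_cast
      -- key: ∑_{u∈s} ≤ 1 + ∑_{u∈s'}
      have hdeg_lt : ∀ u ∈ s, ((s.filter (G.Adj u)).card : ℝ) ≤ (s.card : ℝ) - 1 := by
        intro u hu
        have : s.filter (G.Adj u) ⊆ s.erase u := by
          intro w hw
          rw [mem_erase]
          rcases mem_filter.mp hw with ⟨hws, haw⟩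
          exact ⟨fun h => G.irrefl (h ▸ haw), hws⟩
        have h2 := card_le_card this
        rw [card_erase_of_mem hu] at h2
        have hpos : 1 ≤ s.card := card_pos.mpr ⟨u, hu⟩
        have h3 : (s.filter (G.Adj u)).card + 1 ≤ s.card := by omega
        have := (Nat.cast_le (α := ℝ)).mpr h3
        push_cast at this
        linarith
      have hsplit : (∑ u ∈ s, (1 : ℝ) / ((s.card : ℝ) - (s.filter (G.Adj u)).card))
          = (∑ u ∈ s', (1 : ℝ) / ((s.card : ℝ) - (s.filter (G.Adj u)).card))
          + ∑ u ∈ s \ s', (1 : ℝ) / ((s.card : ℝ) - (s.filter (G.Adj u)).card) := by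
        rw [← Finset.sum_sdiff hs's]; ring
      rw [hsplit]
      have hcard_sd : ((s \ s').card : ℝ) = (s.card : ℝ) - s'.card := by
        rw [card_sdiff_of_subset hs's]
        have := card_le_card hs's
        push_cast [Nat.cast_sub this]
        ring
      have hsd_pos : (0 : ℝ) < ((s \ s').card : ℝ) := by
        have : v ∈ s \ s' := mem_sdiff.mpr ⟨hv, hvs'⟩
        exact_mod_cast card_pos.mpr ⟨v, this⟩
      -- part (a): sum over s \ s' ≤ 1
      have ha : (∑ u ∈ s \ s', (1 : ℝ) / ((s.card : ℝ) - (s.filter (G.Adj u)).card)) ≤ 1 := by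
        have hbound : ∀ u ∈ s \ s',
            (1 : ℝ) / ((s.card : ℝ) - (s.filter (G.Adj u)).card) ≤ 1 / ((s \ s').card : ℝ) := by
          intro u hu
          have hus : u ∈ s := (mem_sdiff.mp hu).1
          have h1 : ((s.filter (G.Adj u)).card : ℝ) ≤ s'.card := by
            exact_mod_cast hmax u hus
          have h2 : (0 : ℝ) < (s.card : ℝ) - (s.filter (G.Adj u)).card := by
            have := hdeg_lt u hus; linarith
          apply one_div_le_one_div_of_le hsd_pos
          rw [hcard_sd]; linarith
        calc (∑ u ∈ s \ s', (1 : ℝ) / ((s.card : ℝ) - (s.filter (G.Adj u)).card))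
            ≤ ∑ u ∈ s \ s', (1 : ℝ) / ((s \ s').card : ℝ) := Finset.sum_le_sum hbound
          _ = ((s \ s').card : ℝ) * (1 / ((s \ s').card : ℝ)) := by
              rw [Finset.sum_const, nsmul_eq_mul]
          _ = 1 := by field_simp
      -- part (b): termwise over s'
      have hb : (∑ u ∈ s', (1 : ℝ) / ((s.card : ℝ) - (s.filter (G.Adj u)).card))
          ≤ ∑ u ∈ s', (1 : ℝ) / ((s'.card : ℝ) - (s'.filter (G.Adj u)).card) := by
        apply Finset.sum_le_sum
        intro u hu
        have hus : u ∈ s := hs's hu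
        have hsub : s.filter (G.Adj u) ⊆ s'.filter (G.Adj u) ∪ (s \ s') := by
          intro w hw
          rcases mem_filter.mp hw with ⟨hws, haw⟩
          by_cases hws' : w ∈ s'
          · exact mem_union_left _ (mem_filter.mpr ⟨hws', haw⟩)
          · exact mem_union_right _ (mem_sdiff.mpr ⟨hws, hws'⟩)
        have hcardle : ((s.filter (G.Adj u)).card : ℝ)
            ≤ ((s'.filter (G.Adj u)).card : ℝ) + ((s \ s').card : ℝ) := by
          have := (card_le_card hsub).trans (card_union_le _ _)
          exact_mod_cast this
        have hpos' : (0 : ℝ) < (s'.card : ℝ) - (s'.filter (G.Adj u)).card := by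
          have h1 : s'.filter (G.Adj u) ⊆ s'.erase u := by
            intro w hw
            rw [mem_erase]
            rcases mem_filter.mp hw with ⟨hws, haw⟩
            exact ⟨fun h => G.irrefl (h ▸ haw), hws⟩
          have h2 := card_le_card h1
          rw [card_erase_of_mem hu] at h2
          have h3 : 1 ≤ s'.card := card_pos.mpr ⟨u, hu⟩
          have h4 : (s'.filter (G.Adj u)).card + 1 ≤ s'.card := by omega
          have := (Nat.cast_le (α := ℝ)).mpr h4
          push_cast at this
          linarith
        apply one_div_le_one_div_of_le hpos'
        rw [hcard_sd] at hcardle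
        linarith
      linarith
/-- Wei's inequality for the clique number: ω(G) ≥ ∑_v 1/(n - d(v)). -/
theorem wei_clique {V : Type*} [Fintype V] (G : SimpleGraph V) [DecidableRel G.Adj] :
    (∑ v : V, (1 : ℝ) / ((Fintype.card V : ℝ) - G.degree v)) ≤ G.cliqueNum := by
  classical
  obtain ⟨t, _, htc, hsum⟩ := wei_aux G (univ : Finset V)
  have hdeg : ∀ v : V, ((univ : Finset V).filter (G.Adj v)).card = G.degree v := by
    intro v
    rw [← SimpleGraph.card_neighborFinset_eq_degree]
    congr 1
    ext w
    simp [SimpleGraph.mem_neighborFinset]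
  have : (∑ v : V, (1 : ℝ) / ((Fintype.card V : ℝ) - G.degree v))
      ≤ (t.card : ℝ) := by
    calc (∑ v : V, (1 : ℝ) / ((Fintype.card V : ℝ) - G.degree v))
        = ∑ v ∈ (univ : Finset V), (1 : ℝ)
            / (((univ : Finset V).card : ℝ) - ((univ : Finset V).filter (G.Adj v)).card) := by
          apply Finset.sum_congr rfl
          intro v _
          rw [hdeg v, card_univ]
      _ ≤ t.card := hsum
  refine this.trans ?_
  exact_mod_cast htc.card_le_cliqueNum
end

section
/- If a graph G on n vertices admits a partition of its vertex set into r pairwise disjoint δ-sets V_1, ..., V_r, then Σ_{v ∈ V(G)} 1/(n - d(v)) ≤ r. -/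
/-!
Each vertex `v` of a δ-set `S` has `n - d(v) ≥ |S|`, so the vertices of `S` contribute at most
`|S| · 1/|S| = 1` to the weight. Since every term of the weight is positive, covering `V(G)` by
`r` δ-sets bounds the weight by `r`.
-/

open Finset

/-- A δ-set in `G`: every vertex of `S` has degree at most `n - |S|`. -/
def IsDeltaSet {V : Type*} [Fintype V] (G : SimpleGraph V) [DecidableRel G.Adj]
    (S : Finset V) : Prop :=
  ∀ v ∈ S, G.degree v ≤ Fintype.card V - S.card

theorem Finset.sum_le_sum_sum_of_forall_exists_mem {ι α M : Type*} [Fintype ι] [Fintype α]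
    [AddCommMonoid M] [PartialOrder M] [IsOrderedAddMonoid M] {t : ι → Finset α}
    (hcover : ∀ a, ∃ i, a ∈ t i) {f : α → M} (hf : ∀ a, 0 ≤ f a) :
    ∑ a, f a ≤ ∑ i, ∑ a ∈ t i, f a := by
  classical
  rw [Finset.sum_comm' (t' := univ) (s' := fun a => {i | a ∈ t i}) (by simp)]
  refine sum_le_sum fun a _ => ?_
  obtain ⟨i, hi⟩ := hcover a
  exact single_le_sum (f := fun _ => f a) (fun _ _ => hf a) (by simpa using hi)

section

variable {V : Type*} [Fintype V] {G : SimpleGraph V} [DecidableRel G.Adj]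

theorem SimpleGraph.one_div_card_sub_degree_pos (v : V) :
    0 < (1 : ℝ) / ((Fintype.card V : ℝ) - G.degree v) := by
  have := G.degree_lt_card_verts v
  exact one_div_pos.2 (sub_pos.2 (by exact_mod_cast this))

theorem IsDeltaSet.card_le_card_sub_degree {S : Finset V} (hS : IsDeltaSet G S) {v : V}
    (hv : v ∈ S) : (#S : ℝ) ≤ (Fintype.card V : ℝ) - G.degree v := by
  have hdeg := hS v hv
  have hcard := card_le_univ S
  rw [le_sub_iff_add_le]
  exact_mod_cast (by omega : #S + G.degree v ≤ Fintype.card V)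

theorem IsDeltaSet.sum_one_div_card_sub_degree_le_one {S : Finset V} (hS : IsDeltaSet G S) :
    ∑ v ∈ S, (1 : ℝ) / ((Fintype.card V : ℝ) - G.degree v) ≤ 1 := by
  have hterm : ∀ v ∈ S, (1 : ℝ) / ((Fintype.card V : ℝ) - G.degree v) ≤ 1 / #S := fun v hv =>
    one_div_le_one_div_of_le (by exact_mod_cast card_pos.2 ⟨v, hv⟩)
      (hS.card_le_card_sub_degree hv)
  calc ∑ v ∈ S, (1 : ℝ) / ((Fintype.card V : ℝ) - G.degree v)
      ≤ #S • (1 / (#S : ℝ)) := sum_le_card_nsmul S _ _ hterm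
    _ = (#S : ℝ) / #S := by rw [nsmul_eq_mul, mul_one_div]
    _ ≤ 1 := div_self_le_one _

end

theorem weight_le_of_genPartition_general {V : Type*} [Fintype V] (G : SimpleGraph V)
    [DecidableRel G.Adj] (r : ℕ) (P : Fin r → Finset V)
    (hdelta : ∀ i, IsDeltaSet G (P i))
    (hcover : ∀ v : V, ∃ i, v ∈ P i) :
    (∑ v : V, (1 : ℝ) / ((Fintype.card V : ℝ) - G.degree v)) ≤ r :=
  calc ∑ v : V, (1 : ℝ) / ((Fintype.card V : ℝ) - G.degree v)
      ≤ ∑ i, ∑ v ∈ P i, (1 : ℝ) / ((Fintype.card V : ℝ) - G.degree v) :=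
        sum_le_sum_sum_of_forall_exists_mem hcover fun v =>
          (G.one_div_card_sub_degree_pos v).le
    _ ≤ ∑ _i : Fin r, (1 : ℝ) :=
        sum_le_sum fun i _ => (hdelta i).sum_one_div_card_sub_degree_le_one
    _ = r := by simp

/-- If `V(G)` partitions into `r` pairwise disjoint δ-sets, then
`W(G) = ∑_v 1/(n - d(v)) ≤ r`. -/
theorem weight_le_of_genPartition {V : Type*} [Fintype V] (G : SimpleGraph V)
    [DecidableRel G.Adj] (r : ℕ) (P : Fin r → Finset V)
    (hdelta : ∀ i, IsDeltaSet G (P i))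
    (hdisj : ∀ i j, i ≠ j → Disjoint (P i) (P j))
    (hcover : ∀ v : V, ∃ i, v ∈ P i) :
    (∑ v : V, (1 : ℝ) / ((Fintype.card V : ℝ) - G.degree v)) ≤ r :=
  weight_le_of_genPartition_general G r P hdelta hcover
end

section
/- Every α-sequence v_1, ..., v_s in a graph G can be extended to an α-sequence v_1, ..., v_s, ..., v_r such that N(v_1, ..., v_{r-1}) is a δ-set in G. -/
/-!
Repeatedly append a vertex of maximum degree in the subgraph induced on the current common
neighborhood. The common neighborhood loses at least the appended vertex, so the process stops,
and it stops exactly when the common neighborhood of the whole sequence is empty. The previous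
common neighborhood `S` then contains no neighbor of its maximum-degree vertex, hence none of any
of its vertices: `S` is independent, so every degree in `S` is at most `n - |S|`.
-/

open Finset

/-- The common neighborhood `N(v_1, …, v_k)` of the first `k` terms of a sequence. -/
def commonNbrs {V : Type*} [Fintype V] (G : SimpleGraph V) [DecidableRel G.Adj]
    {r : ℕ} (v : Fin r → V) (k : ℕ) : Finset V :=
  Finset.univ.filter fun w => ∀ j : Fin r, (j : ℕ) < k → G.Adj (v j) w

/-- An α-sequence: `v 0` has maximum degree in `G`, and each subsequent `v i` lies in the
common neighborhood of the previous terms and has maximum degree in the subgraph induced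
on that common neighborhood. -/
def IsAlphaSeq {V : Type*} [Fintype V] [DecidableEq V] (G : SimpleGraph V) [DecidableRel G.Adj]
    (r : ℕ) (v : Fin r → V) : Prop :=
  (∀ h : 0 < r, ∀ w : V, G.degree w ≤ G.degree (v ⟨0, h⟩)) ∧
  ∀ i : Fin r, 0 < (i : ℕ) →
    v i ∈ commonNbrs G v i ∧
    ∀ w ∈ commonNbrs G v i,
      (commonNbrs G v i ∩ G.neighborFinset w).card ≤
        (commonNbrs G v i ∩ G.neighborFinset (v i)).card

namespace SimpleGraph

variable {V : Type*} [Fintype V] [DecidableEq V] {G : SimpleGraph V} [DecidableRel G.Adj]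

theorem isDeltaSet_of_isIndepSet {S : Finset V} (hS : G.IsIndepSet S) : IsDeltaSet G S := by
  intro x hx
  have hsub : G.neighborFinset x ⊆ univ \ S := fun y hy =>
    mem_sdiff.2 ⟨mem_univ y, fun hyS => hS hx hyS (G.ne_of_adj ((G.mem_neighborFinset x y).1 hy))
      ((G.mem_neighborFinset x y).1 hy)⟩
  calc G.degree x = #(G.neighborFinset x) := (G.card_neighborFinset_eq_degree x).symm
    _ ≤ #(univ \ S) := card_le_card hsub
    _ = Fintype.card V - #S := by rw [card_sdiff_of_subset (subset_univ S), card_univ]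

def IsMaxInducedDegree (G : SimpleGraph V) [DecidableRel G.Adj] (S : Finset V) (w : V) : Prop :=
  w ∈ S ∧ ∀ x ∈ S, #(S ∩ G.neighborFinset x) ≤ #(S ∩ G.neighborFinset w)

theorem exists_isMaxInducedDegree {S : Finset V} (hS : S.Nonempty) :
    ∃ w, G.IsMaxInducedDegree S w :=
  S.exists_max_image (fun x => #(S ∩ G.neighborFinset x)) hS

theorem IsMaxInducedDegree.isIndepSet {S : Finset V} {w : V} (hw : G.IsMaxInducedDegree S w)
    (hempty : S ∩ G.neighborFinset w = ∅) : G.IsIndepSet S := by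
  intro x hx y hy _ hxy
  have hx0 : S ∩ G.neighborFinset x = ∅ := by
    simpa [hempty] using hw.2 x hx
  exact (eq_empty_iff_forall_notMem.1 hx0) y (mem_inter.2 ⟨hy, (G.mem_neighborFinset x y).2 hxy⟩)

end SimpleGraph

section AlphaSeq

open SimpleGraph

variable {V : Type*} [Fintype V] {G : SimpleGraph V} [DecidableRel G.Adj]

theorem mem_commonNbrs {r : ℕ} {v : Fin r → V} {k : ℕ} {x : V} :
    x ∈ commonNbrs G v k ↔ ∀ j : Fin r, (j : ℕ) < k → G.Adj (v j) x := by
  simp [commonNbrs]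

theorem commonNbrs_zero {r : ℕ} (v : Fin r → V) : commonNbrs G v 0 = univ := by
  ext x
  simp [mem_commonNbrs]

theorem commonNbrs_snoc {r : ℕ} (v : Fin r → V) (w : V) {k : ℕ} (hk : k ≤ r) :
    commonNbrs G (Fin.snoc v w : Fin (r + 1) → V) k = commonNbrs G v k := by
  ext x
  simp only [mem_commonNbrs]
  refine ⟨fun h j hj => by simpa using h j.castSucc hj, fun h j hj => ?_⟩
  rcases Fin.eq_castSucc_or_eq_last j with ⟨j, rfl⟩ | rfl
  · simpa using h j hj
  · exact absurd hj (by simpa using hk)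

variable [DecidableEq V]

theorem commonNbrs_succ {r : ℕ} (v : Fin r → V) {k : ℕ} (hk : k < r) :
    commonNbrs G v (k + 1) = commonNbrs G v k ∩ G.neighborFinset (v ⟨k, hk⟩) := by
  ext x
  simp only [mem_commonNbrs, mem_inter, mem_neighborFinset, Nat.lt_succ_iff_lt_or_eq]
  refine ⟨fun h => ⟨fun j hj => h j (Or.inl hj), h ⟨k, hk⟩ (Or.inr rfl)⟩, ?_⟩
  rintro ⟨hlt, hlast⟩ j (hj | hj)
  · exact hlt j hj
  · obtain rfl : j = ⟨k, hk⟩ := Fin.ext hj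
    exact hlast

theorem commonNbrs_snoc_self {r : ℕ} (v : Fin r → V) (w : V) :
    commonNbrs G (Fin.snoc v w : Fin (r + 1) → V) (r + 1) =
      commonNbrs G v r ∩ G.neighborFinset w := by
  rw [commonNbrs_succ _ (Nat.lt_succ_self r), commonNbrs_snoc v w le_rfl,
    show (⟨r, Nat.lt_succ_self r⟩ : Fin (r + 1)) = Fin.last r from rfl, Fin.snoc_last]

theorem card_commonNbrs_snoc_lt {r : ℕ} {v : Fin r → V} {w : V} (hw : w ∈ commonNbrs G v r) :
    #(commonNbrs G (Fin.snoc v w : Fin (r + 1) → V) (r + 1)) < #(commonNbrs G v r) := by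
  rw [commonNbrs_snoc_self]
  exact card_lt_card ((ssubset_iff_of_subset inter_subset_left).2
    ⟨w, hw, fun h => G.irrefl ((G.mem_neighborFinset w w).1 (mem_inter.1 h).2)⟩)

theorem IsAlphaSeq.isMaxInducedDegree {r : ℕ} {v : Fin r → V} (hα : IsAlphaSeq G r v)
    (i : Fin r) : G.IsMaxInducedDegree (commonNbrs G v i) (v i) := by
  obtain ⟨_ | i, hi⟩ := i
  · rw [show ((⟨0, hi⟩ : Fin r) : ℕ) = 0 from rfl, commonNbrs_zero]
    exact ⟨mem_univ _, fun x _ => by simpa using hα.1 hi x⟩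
  · exact hα.2 _ i.succ_pos

theorem IsAlphaSeq.snoc {r : ℕ} {v : Fin r → V} (hα : IsAlphaSeq G r v) {w : V}
    (hw : G.IsMaxInducedDegree (commonNbrs G v r) w) :
    IsAlphaSeq G (r + 1) (Fin.snoc v w) := by
  refine ⟨fun h x => ?_, fun i hi => ?_⟩
  · rcases Nat.eq_zero_or_pos r with rfl | hr
    · rw [show (⟨0, h⟩ : Fin (0 + 1)) = Fin.last 0 from rfl, Fin.snoc_last]
      simpa [commonNbrs_zero] using hw.2 x
    · have h0 : (⟨0, h⟩ : Fin (r + 1)) = Fin.castSucc ⟨0, hr⟩ := rfl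
      rw [h0, Fin.snoc_castSucc]
      exact hα.1 hr x
  · rcases Fin.eq_castSucc_or_eq_last i with ⟨i, rfl⟩ | rfl
    · rw [Fin.val_castSucc, commonNbrs_snoc v w i.is_lt.le, Fin.snoc_castSucc]
      exact hα.2 i hi
    · rw [Fin.val_last, commonNbrs_snoc v w le_rfl, Fin.snoc_last]
      exact hw

theorem IsAlphaSeq.exists_snoc {r : ℕ} {v : Fin r → V} (hα : IsAlphaSeq G r v)
    (hne : (commonNbrs G v r).Nonempty) :
    ∃ w, IsAlphaSeq G (r + 1) (Fin.snoc v w) ∧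
      #(commonNbrs G (Fin.snoc v w : Fin (r + 1) → V) (r + 1)) < #(commonNbrs G v r) := by
  obtain ⟨w, hw⟩ := exists_isMaxInducedDegree (G := G) hne
  exact ⟨w, hα.snoc hw, card_commonNbrs_snoc_lt hw.1⟩

theorem IsAlphaSeq.isDeltaSet_of_commonNbrs_eq_empty {r : ℕ} {v : Fin r → V}
    (hα : IsAlphaSeq G r v) (hempty : commonNbrs G v r = ∅) :
    IsDeltaSet G (commonNbrs G v (r - 1)) := by
  rcases Nat.eq_zero_or_pos r with rfl | hr
  · simpa [hempty] using isDeltaSet_of_isIndepSet (G := G) (S := ∅) (by simp)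
  · have hlast := hα.isMaxInducedDegree ⟨r - 1, Nat.sub_lt hr one_pos⟩
    refine isDeltaSet_of_isIndepSet (hlast.isIndepSet ?_)
    rw [← commonNbrs_succ]
    show commonNbrs G v (r - 1 + 1) = ∅
    rwa [Nat.sub_add_cancel hr]

end AlphaSeq

/-- Every α-sequence `v_1, …, v_s` extends to an α-sequence `v_1, …, v_s, …, v_r`
such that `N(v_1, …, v_{r-1})` is a δ-set. -/
theorem alphaSeq_extend {V : Type*} [Fintype V] [DecidableEq V]
    (G : SimpleGraph V) [DecidableRel G.Adj] (s : ℕ) (v : Fin s → V)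
    (hα : IsAlphaSeq G s v) :
    ∃ (r : ℕ) (h : s ≤ r) (u : Fin r → V), IsAlphaSeq G r u ∧
      (∀ i : Fin s, u (Fin.castLE h i) = v i) ∧
      IsDeltaSet G (commonNbrs G u (r - 1)) := by
  induction hn : #(commonNbrs G v s) using Nat.strong_induction_on generalizing s v with
  | _ n ih =>
    rcases (commonNbrs G v s).eq_empty_or_nonempty with hempty | hne
    · exact ⟨s, le_rfl, v, hα, fun _ => rfl, hα.isDeltaSet_of_commonNbrs_eq_empty hempty⟩
    · obtain ⟨w, hαw, hlt⟩ := hα.exists_snoc hne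
      obtain ⟨r, hr, u, hu, hextends, hδ⟩ := ih _ (hn ▸ hlt) (s + 1) (Fin.snoc v w) hαw rfl
      refine ⟨r, (Nat.le_succ s).trans hr, u, hu, fun i => ?_, hδ⟩
      simpa using hextends i.castSucc
end

section
/- For any graph G on n vertices, ω(G) ≥ φ(G), where φ(G) is the generalized chromatic-type parameter: the least r such that V(G) partitions into r δ-sets. -/
open Finset

/-- A partition of the vertex set into `r` pairwise disjoint δ-sets. -/
def IsGenPartition {V : Type*} [Fintype V] (G : SimpleGraph V) [DecidableRel G.Adj]
    (r : ℕ) (P : Fin r → Finset V) : Prop :=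
  (∀ i, IsDeltaSet G (P i)) ∧ (∀ i j, i ≠ j → Disjoint (P i) (P j)) ∧
    (∀ v : V, ∃ i, v ∈ P i)

/-- `φ(G)`: the least `r` such that `G` is a generalized `r`-partite graph. -/
noncomputable def genPartNum {V : Type*} [Fintype V] (G : SimpleGraph V)
    [DecidableRel G.Adj] : ℕ :=
  sInf {r | ∃ P : Fin r → Finset V, IsGenPartition G r P}

/-!
Greedy construction: take a vertex `v` of maximum degree, put `R \ N(v)` into one class, and
recurse inside `N(v)`. The class is a δ-set because its vertices have degree at most `d(v)`
and it is disjoint from `N(v)`, so it has at most `n - d(v)` elements. The chosen vertices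
form a clique, one per class.
-/

namespace SimpleGraph

variable {V : Type*} [Fintype V] (G : SimpleGraph V) [DecidableRel G.Adj]

lemma isDeltaSet_filter_not_adj_of_degree_le {R : Finset V} {v : V}
    (hv : ∀ w ∈ R, G.degree w ≤ G.degree v) : IsDeltaSet G (R.filter (¬ G.Adj v ·)) := by
  intro w hw
  have hcard : #(R.filter (¬ G.Adj v ·)) + G.degree v ≤ Fintype.card V := by
    rw [← card_neighborFinset_eq_degree, neighborFinset_eq_filter, add_comm, ← card_univ,
      ← card_filter_add_card_filter_not (s := univ) (G.Adj v)]
    gcongr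
    exact subset_univ R
  have := hv w (mem_filter.mp hw).1
  omega

lemma genPartNum_le_card_of_deltaColoring {α : Type*} [DecidableEq α] (s : Finset α) (c : V → α)
    (hcs : ∀ v, c v ∈ s) (hc : ∀ a, IsDeltaSet G (univ.filter (c · = a))) :
    genPartNum G ≤ #s := by
  refine Nat.sInf_le ⟨fun i => univ.filter (c · = s.equivFin.symm i), fun i => hc _,
    fun i j hij => ?_, fun v => ⟨s.equivFin ⟨c v, hcs v⟩, by simp⟩⟩
  refine disjoint_filter.mpr fun v _ hi hj => hij ?_
  exact s.equivFin.symm.injective (Subtype.ext (hi.symm.trans hj))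

variable [DecidableEq V]

lemma exists_isClique_deltaColoring (R : Finset V) :
    ∃ T ⊆ R, G.IsClique (T : Set V) ∧ ∃ c : V → V,
      (∀ w ∈ R, c w ∈ T) ∧ ∀ t, IsDeltaSet G (R.filter (c · = t)) := by
  induction R using Finset.strongInduction with
  | _ R ih =>
  rcases R.eq_empty_or_nonempty with rfl | hR
  · exact ⟨∅, empty_subset _, by simp, id, by simp, fun t => by simp [IsDeltaSet]⟩
  obtain ⟨v, hvR, hvmax⟩ := R.exists_max_image (fun w => G.degree w) hR
  have hsub : R.filter (G.Adj v) ⊂ R :=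
    filter_ssubset.mpr ⟨v, hvR, G.irrefl⟩
  obtain ⟨T, hTR, hT, c, hcT, hcδ⟩ := ih _ hsub
  have hTadj : ∀ t ∈ T, G.Adj v t := fun t ht => (mem_filter.mp (hTR ht)).2
  let c' : V → V := fun w => if G.Adj v w then c w else v
  refine ⟨insert v T, insert_subset hvR (hTR.trans (filter_subset _ _)),
    by simpa using hT.insert fun t ht _ => hTadj t ht, c', ?_, fun t => ?_⟩
  · intro w hw
    by_cases hvw : G.Adj v w
    · simp [c', hvw, hcT w (mem_filter.mpr ⟨hw, hvw⟩)]
    · simp [c', hvw]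
  by_cases htv : t = v
  · subst t
    have hclass : R.filter (c' · = v) = R.filter (¬ G.Adj v ·) := by
      refine filter_congr fun w hw => ?_
      by_cases hvw : G.Adj v w
      · have := hTadj _ (hcT w (mem_filter.mpr ⟨hw, hvw⟩))
        simp only [c', hvw, if_true, not_true_eq_false, iff_false]
        exact fun h => G.irrefl (h ▸ this)
      · simp [c', hvw]
    exact hclass ▸ G.isDeltaSet_filter_not_adj_of_degree_le hvmax
  · have hclass : R.filter (c' · = t) = (R.filter (G.Adj v)).filter (c · = t) := by
      rw [filter_filter]
      refine filter_congr fun w _ => ?_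
      by_cases hvw : G.Adj v w
      · simp [c', hvw]
      · simp [c', hvw, Ne.symm htv]
    exact hclass ▸ hcδ t

end SimpleGraph

/-- `ω(G) ≥ φ(G)`. -/
theorem genPartNum_le_cliqueNum {V : Type*} [Fintype V] (G : SimpleGraph V)
    [DecidableRel G.Adj] : genPartNum G ≤ G.cliqueNum := by
  classical
  obtain ⟨T, -, hT, c, hcT, hcδ⟩ := G.exists_isClique_deltaColoring univ
  calc genPartNum G ≤ #T :=
        G.genPartNum_le_card_of_deltaColoring T c (fun v => hcT v (mem_univ v)) hcδ
    _ ≤ G.cliqueNum := hT.card_le_cliqueNum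
end

section
/- If v_1, ..., v_r is a β-sequence in a graph G on n vertices that is not contained in an (r+1)-clique, then d(v_1) + ... + d(v_r) ≤ (r-1)n, and consequently (assuming this implies G is generalized r-partite) r ≥ W(G) = Σ_{v} 1/(n - d(v)). -/
open Finset

/-- A β-sequence: `v 0` has maximum degree in `G` and each subsequent `v i` lies in the
common neighborhood of the previous terms and has maximum degree in `G` among the
vertices of that common neighborhood. -/
def IsBetaSeq {V : Type*} [Fintype V] (G : SimpleGraph V) [DecidableRel G.Adj]
    (r : ℕ) (v : Fin r → V) : Prop :=
  (∀ h : 0 < r, ∀ w : V, G.degree w ≤ G.degree (v ⟨0, h⟩)) ∧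
  ∀ i : Fin r, 0 < (i : ℕ) →
    v i ∈ commonNbrs G v i ∧
    ∀ w ∈ commonNbrs G v i, G.degree w ≤ G.degree (v i)


/-- If a β-sequence `v_1, …, v_r` is not contained in an `(r+1)`-clique
(`N(v_1, …, v_r) = ∅`), then `d(v_1) + ⋯ + d(v_r) ≤ (r-1)n`; consequently, assuming
this degree condition implies `G` is generalized `r`-partite, `r ≥ W(G)`. -/
theorem betaSeq_degreeSum_and_weight {V : Type*} [Fintype V] (G : SimpleGraph V)
    [DecidableRel G.Adj] (r : ℕ) (v : Fin r → V)
    (hβ : IsBetaSeq G r v) (hmax : commonNbrs G v r = ∅)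
    (hyp : (∑ i : Fin r, G.degree (v i) ≤ (r - 1) * Fintype.card V) →
      ∃ P : Fin r → Finset V, IsGenPartition G r P) :
    (∑ i : Fin r, G.degree (v i) ≤ (r - 1) * Fintype.card V) ∧
      (∑ w : V, (1 : ℝ) / ((Fintype.card V : ℝ) - G.degree w)) ≤ r := by
  classical
  have h1 : ∑ i : Fin r, G.degree (v i) ≤ (r - 1) * Fintype.card V := by
    have key : ∀ w : V, (univ.filter fun i : Fin r => G.Adj (v i) w).card ≤ r - 1 := by
      intro w
      have hw : w ∉ commonNbrs G v r := by rw [hmax]; exact notMem_empty w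
      simp only [commonNbrs, mem_filter, mem_univ, true_and, not_forall] at hw
      obtain ⟨j, _, hadj⟩ := hw
      have hss : (univ.filter fun i : Fin r => G.Adj (v i) w) ⊂ univ := by
        refine Finset.ssubset_univ_iff.mpr ?_
        intro h
        have := h ▸ Finset.mem_univ j
        rw [mem_filter] at this
        exact hadj this.2
      have := Finset.card_lt_card hss
      simp only [Finset.card_univ, Fintype.card_fin] at this
      omega
    have deg_eq : ∀ x : V, G.degree x = (univ.filter fun w => G.Adj x w).card := by
      intro x
      rw [SimpleGraph.degree]
      congr 1
      ext w
      simp [SimpleGraph.mem_neighborFinset]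
    calc ∑ i : Fin r, G.degree (v i)
        = ∑ i : Fin r, ∑ w : V, (if G.Adj (v i) w then 1 else 0) := by
          simp only [deg_eq]
          exact Finset.sum_congr rfl fun i _ => Finset.card_filter _ _
      _ = ∑ w : V, ∑ i : Fin r, (if G.Adj (v i) w then 1 else 0) := Finset.sum_comm
      _ = ∑ w : V, (univ.filter fun i : Fin r => G.Adj (v i) w).card :=
          Finset.sum_congr rfl fun w _ => (Finset.card_filter _ _).symm
      _ ≤ ∑ _w : V, (r - 1) := Finset.sum_le_sum fun w _ => key w
      _ = (r - 1) * Fintype.card V := by simp [mul_comm]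
  refine ⟨h1, ?_⟩
  obtain ⟨P, hδ, hdisj, hcov⟩ := hyp h1
  set n := Fintype.card V with hn
  have hunion : (univ : Finset V) = univ.biUnion P := by
    ext w
    simp only [mem_univ, mem_biUnion, true_iff]
    obtain ⟨i, hi⟩ := hcov w
    exact ⟨i, trivial, hi⟩
  have hsum : ∑ w : V, (1 : ℝ) / ((n : ℝ) - G.degree w)
      = ∑ i : Fin r, ∑ w ∈ P i, (1 : ℝ) / ((n : ℝ) - G.degree w) := by
    rw [hunion, Finset.sum_biUnion]
    intro i _ j _ hij
    exact hdisj i j hij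
  rw [hsum]
  have hbound : ∀ i : Fin r, ∑ w ∈ P i, (1 : ℝ) / ((n : ℝ) - G.degree w) ≤ 1 := by
    intro i
    rcases Finset.eq_empty_or_nonempty (P i) with h | h
    · simp [h]
    · have hcard : 0 < (P i).card := Finset.card_pos.mpr h
      have hle : (P i).card ≤ n := by
        rw [hn]; exact Finset.card_le_univ _
      have step : ∀ w ∈ P i, (1 : ℝ) / ((n : ℝ) - G.degree w) ≤ 1 / (P i).card := by
        intro w hw
        have hd := hδ i w hw
        have hnat : G.degree w + (P i).card ≤ n := by omega
        have hr : ((P i).card : ℝ) ≤ (n : ℝ) - G.degree w := by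
          have : ((G.degree w + (P i).card : ℕ) : ℝ) ≤ (n : ℝ) := by exact_mod_cast hnat
          push_cast at this
          linarith
        exact one_div_le_one_div_of_le (by exact_mod_cast hcard) hr
      calc ∑ w ∈ P i, (1 : ℝ) / ((n : ℝ) - G.degree w)
          ≤ ∑ _w ∈ P i, (1 : ℝ) / (P i).card := Finset.sum_le_sum step
        _ = (P i).card * (1 / (P i).card) := by simp [mul_comm]
        _ = 1 := by
            field_simp
  calc ∑ i : Fin r, ∑ w ∈ P i, (1 : ℝ) / ((n : ℝ) - G.degree w)
      ≤ ∑ _i : Fin r, (1 : ℝ) := Finset.sum_le_sum fun i _ => hbound i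
    _ = r := by simp
end
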